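/- For every ε > 0 there exists an integer k ≥ 3 such that for the instance I_k the following hold simultaneously: (a) there exists a multi-commodity flow over time (storage permitted) with time horizon k+1; (b) every multi-commodity flow over time without intermediate storage has time horizon strictly greater than 2k−2; and (c) 2k−2 > (2−ε)·(k+1). Consequently, the ratio between the optimal time horizon without intermediate storage and the optimal time horizon with storage can be made larger than 2−ε for any ε > 0; i.e., the speed-up through storage for quickest multi-commodity flows can be arbitrarily close to the factor 2. -/

import Mathlib

open MeasureTheory Set

/-- A multi-commodity flow over time with time horizon `T` for the cycle instance with `k` nodes
`v_0, …, v_{k-1}`, arcs `a_j = (v_j, v_{(j+1) % k})` of unit capacity and unit transit time,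
`k` commodities where commodity `i` has source `v_i`, sink `v_{(i-1) % k}` and demand `d i`.
`f i j` is the flow rate function of commodity `i` into arc `a_j`. -/
def IsMCFlow (k : ℕ) (T : ℝ) (d : ℕ → ℝ) (f : ℕ → ℕ → ℝ → ℝ) : Prop :=
  -- positive time horizon
  0 < T ∧
  -- integrable flow rate functions
  (∀ i < k, ∀ j < k, Integrable (f i j)) ∧
  -- nonnegative flow rates
  (∀ i < k, ∀ j < k, ∀ θ : ℝ, 0 ≤ f i j θ) ∧
  -- flow rates vanish outside [0, T)
  (∀ i < k, ∀ j < k, ∀ θ : ℝ, θ ∉ Ico (0 : ℝ) T → f i j θ = 0) ∧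
  -- capacity constraints, for almost every time
  (∀ j < k, ∀ᵐ θ : ℝ, ∑ i ∈ Finset.range k, f i j θ ≤ 1) ∧
  -- weak flow conservation: flow can only emerge from the source `v_i` of commodity `i`;
  -- node `v_m` has unique incoming arc `a_{(m-1) % k}` and unique outgoing arc `a_m`
  (∀ i < k, ∀ m < k, m ≠ i → ∀ θ ∈ Ico (0 : ℝ) T,
    0 ≤ (∫ ξ in (0 : ℝ)..(θ - 1), f i ((m + k - 1) % k) ξ) -
        ∫ ξ in (0 : ℝ)..θ, f i m ξ) ∧
  -- demands are fulfilled at time `T`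
  (∀ i < k, ∀ m < k,
    (∫ ξ in (0 : ℝ)..(T - 1), f i ((m + k - 1) % k) ξ) -
        (∫ ξ in (0 : ℝ)..T, f i m ξ) =
      if m = (i + k - 1) % k then d i
      else if m = i then -d i
      else 0)

/-- The flow is without intermediate storage: flow conservation holds with equality at every
node other than the source `v_i` and the sink `v_{(i-1) % k}` of each commodity `i`. -/
def NoStorage (k : ℕ) (T : ℝ) (f : ℕ → ℕ → ℝ → ℝ) : Prop :=
  ∀ i < k, ∀ m < k, m ≠ i → m ≠ (i + k - 1) % k → ∀ θ ∈ Ico (0 : ℝ) T,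
    (∫ ξ in (0 : ℝ)..(θ - 1), f i ((m + k - 1) % k) ξ) =
      ∫ ξ in (0 : ℝ)..θ, f i m ξ

/-- The demands of the instance `I_k`: commodity `0` has demand `2`,
all other commodities have demand `1`. -/
noncomputable def demandI (i : ℕ) : ℝ := if i = 0 then 2 else 1

/-! With storage, the schedule `storageFlow` meets all demands by time `k + 1`. Without
storage, the flow of commodity `i` entering arc `a_{i+p}` (`p ≤ k - 2`) is its outflow from the
source delayed by `p`. All of `d_i` must leave `v_i` by time `T - (k - 1)`, which is at most
`k - 1` when `T ≤ 2k - 2`; hence during the single time unit `[k - 2, k - 1]` the arcs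
`a_i, …, a_{i+k-2}` together carry the outflow of commodity `i` over `[0, k - 1]`, at least `d_i`.
Summing over the commodities, the `k` unit-capacity arcs would carry `∑ d_i = k + 1` units in
one time unit. -/

section CumulativeFlow

variable {g : ℝ → ℝ}

theorem intervalIntegral_zero_eq_zero_of_nonpos (hg : ∀ ξ < 0, g ξ = 0) {θ : ℝ} (hθ : θ ≤ 0) :
    ∫ ξ in (0 : ℝ)..θ, g ξ = 0 := by
  rw [intervalIntegral.integral_symm, intervalIntegral.integral_of_le hθ,
    integral_Ioc_eq_integral_Ioo, setIntegral_eq_zero_of_forall_eq_zero fun ξ hξ => hg ξ hξ.2,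
    neg_zero]

theorem monotone_intervalIntegral_zero (hg : Integrable g) (hg0 : 0 ≤ g) :
    Monotone fun θ => ∫ ξ in (0 : ℝ)..θ, g ξ := by
  intro a b hab
  have hsplit := intervalIntegral.integral_interval_sub_left (μ := volume)
    (hg.intervalIntegrable (a := 0) (b := b)) (hg.intervalIntegrable (b := a))
  have hpos : 0 ≤ ∫ ξ in a..b, g ξ := intervalIntegral.integral_nonneg hab fun ξ _ => hg0 ξ
  dsimp only
  linarith

theorem intervalIntegral_indicator_Ico_one {a b θ : ℝ} (ha : 0 ≤ a) :
    ∫ ξ in (0 : ℝ)..θ, (Ico a b).indicator 1 ξ = max (min (θ - a) (b - a)) 0 := by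
  rcases le_or_gt 0 θ with hθ | hθ
  · rw [intervalIntegral.integral_of_le hθ, ← integral_Ico_eq_integral_Ioc,
      ← integral_indicator measurableSet_Ico, indicator_indicator, Ico_inter_Ico,
      integral_indicator_one measurableSet_Ico, Real.volume_real_Ico, max_eq_right ha,
      min_sub_sub_right]
  · rw [intervalIntegral_zero_eq_zero_of_nonpos (fun ξ hξ => indicator_of_notMem
      (fun h => (hξ.trans_le ha).not_ge h.1) _) hθ.le]
    exact (max_eq_right ((min_le_left _ _).trans (by linarith))).symm

theorem sum_intervalIntegral_le_of_ae_sum_le_one {ι : Type*} {s : Finset ι} {g : ι → ℝ → ℝ}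
    (hg : ∀ i ∈ s, Integrable (g i)) (hcap : ∀ᵐ ξ, ∑ i ∈ s, g i ξ ≤ 1) {a b : ℝ} (hab : a ≤ b) :
    ∑ i ∈ s, ∫ ξ in a..b, g i ξ ≤ b - a := by
  rw [← intervalIntegral.integral_finsetSum fun i hi => (hg i hi).intervalIntegrable]
  calc ∫ ξ in a..b, ∑ i ∈ s, g i ξ ≤ ∫ _ in a..b, (1 : ℝ) :=
        intervalIntegral.integral_mono_ae hab
          (integrable_finsetSum s hg).intervalIntegrable intervalIntegrable_const hcap
    _ = b - a := by simp

end CumulativeFlow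

theorem Nat.add_mod_eq_add_mod_iff {k i p q : ℕ} (hp : p < k) (hq : q < k) :
    (i + p) % k = (i + q) % k ↔ p = q :=
  ⟨fun h => (Nat.ModEq.add_left_cancel' i h).eq_of_lt_of_lt hp hq, fun h => h ▸ rfl⟩

theorem Nat.add_sub_one_mod_eq {k m : ℕ} (hm : m < k) :
    (m + k - 1) % k = if m = 0 then k - 1 else m - 1 := by
  split_ifs with h
  · subst h
    simp
  · rw [show m + k - 1 = m - 1 + k by omega, Nat.add_mod_right, Nat.mod_eq_of_lt (by omega)]

theorem Nat.add_one_mod_add_sub_one_mod {k : ℕ} (hk : 0 < k) (a : ℕ) :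
    ((a + 1) % k + k - 1) % k = a % k := by
  rw [Nat.add_sub_assoc hk, Nat.mod_add_mod, show a + 1 + (k - 1) = a + k by omega,
    Nat.add_mod_right]

theorem Finset.sum_range_add_mod_le {M : Type*} [AddCommMonoid M] [Preorder M] [AddLeftMono M]
    {k n : ℕ} {g : ℕ → M} (hg : ∀ j < k, 0 ≤ g j) (hn : n ≤ k) (i : ℕ) :
    ∑ p ∈ range n, g ((i + p) % k) ≤ ∑ j ∈ range k, g j := by
  have hinj : Set.InjOn (fun p => (i + p) % k) (range n) := fun p hp q hq h =>
    (Nat.add_mod_eq_add_mod_iff ((mem_range.1 hp).trans_le hn) ((mem_range.1 hq).trans_le hn)).1 h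
  rw [← Finset.sum_image hinj]
  refine Finset.sum_le_sum_of_subset_of_nonneg (fun j hj => ?_) fun j hj _ => hg j (mem_range.1 hj)
  obtain ⟨p, hp, rfl⟩ := mem_image.1 hj
  exact mem_range.2 (Nat.mod_lt _ ((Nat.zero_le p).trans_lt ((mem_range.1 hp).trans_le hn)))

/- Commodity `0` sends its two units along `a_0, …, a_{k-2}`, occupying `a_j` during `[j, j + 2)`.
Every other commodity `i` ships its unit without pause except for one time unit of storage at
`v_{k-1}`, which lets it pass behind commodity `0` on `a_0, …, a_{i-2}`. -/
def storageStart (k i j : ℕ) : ℕ :=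
  if i = 0 then j else if j = k - 1 then k - i else if i ≤ j then j - i else j + k + 1 - i

def storageLength (k i j : ℕ) : ℕ :=
  if j = (i + k - 1) % k then 0 else if i = 0 then 2 else 1

noncomputable def storageFlow (k i j : ℕ) : ℝ → ℝ :=
  (Ico (storageStart k i j : ℝ) (storageStart k i j + storageLength k i j)).indicator 1

section StorageFlow

variable {k i j : ℕ}

theorem storageLength_eq_ite :
    (storageLength k i j : ℝ) = if j = (i + k - 1) % k then 0 else demandI i := by
  unfold storageLength demandI
  split_ifs <;> norm_num

theorem storageStart_add_storageLength_le (hi : i < k) (hj : j < k) :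
    storageStart k i j + storageLength k i j ≤ k := by
  unfold storageStart storageLength
  rw [Nat.add_sub_one_mod_eq hi]
  split_ifs <;> omega

theorem storageStart_add_storageLength_le_max {i' : ℕ} (hi : i < k) (hi' : i' < k)
    (hj : j < k) (hne : i ≠ i') :
    min (storageStart k i j + storageLength k i j) (storageStart k i' j + storageLength k i' j) ≤
      max (storageStart k i j) (storageStart k i' j) := by
  unfold storageStart storageLength
  rw [Nat.add_sub_one_mod_eq hi, Nat.add_sub_one_mod_eq hi']
  split_ifs <;> omega

theorem storageLength_pred_eq_and_storageStart_pred_lt {m : ℕ} (hi : i < k)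
    (hm : m < k) (hmi : m ≠ i) (hm_sink : m ≠ (i + k - 1) % k) :
    storageLength k i ((m + k - 1) % k) = storageLength k i m ∧
      storageStart k i ((m + k - 1) % k) + 1 ≤ storageStart k i m := by
  rw [Nat.add_sub_one_mod_eq hi] at hm_sink
  unfold storageStart storageLength
  rw [Nat.add_sub_one_mod_eq hm, Nat.add_sub_one_mod_eq hi]
  split_ifs at hm_sink ⊢ <;> omega

theorem integral_storageFlow (θ : ℝ) :
    ∫ ξ in (0 : ℝ)..θ, storageFlow k i j ξ =
      max (min (θ - storageStart k i j) (storageLength k i j)) 0 := by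
  rw [storageFlow, intervalIntegral_indicator_Ico_one (Nat.cast_nonneg _), add_sub_cancel_left]

theorem integrable_storageFlow : Integrable (storageFlow k i j) :=
  (integrable_indicator_iff measurableSet_Ico).2 (integrableOn_const (by simp))

theorem storageFlow_eq_zero_of_notMem (hi : i < k) (hj : j < k) {θ : ℝ}
    (hθ : θ ∉ Ico (0 : ℝ) (k + 1)) : storageFlow k i j θ = 0 := by
  have hle : (storageStart k i j : ℝ) + storageLength k i j ≤ k := by
    exact_mod_cast storageStart_add_storageLength_le hi hj
  exact indicator_of_notMem (fun h => hθ ⟨(Nat.cast_nonneg _).trans h.1, by linarith [h.2]⟩) _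

theorem sum_storageFlow_le_one (hj : j < k) (θ : ℝ) :
    ∑ i ∈ Finset.range k, storageFlow k i j θ ≤ 1 := by
  have hdisj : (Finset.range k : Set ℕ).PairwiseDisjoint fun i =>
      Ico (storageStart k i j : ℝ) (storageStart k i j + storageLength k i j) :=
    fun i hi i' hi' hne => Set.Ico_disjoint_Ico.2 (by
      exact_mod_cast storageStart_add_storageLength_le_max (Finset.mem_range.1 hi)
        (Finset.mem_range.1 hi') hj hne)
  rw [show ∑ i ∈ Finset.range k, storageFlow k i j θ = _ from
    (congrFun (Finset.indicator_biUnion _ _ hdisj) θ).symm]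
  exact indicator_le_self' (fun _ _ => zero_le_one) θ

theorem integral_storageFlow_of_le (hi : i < k) (hj : j < k) {θ : ℝ}
    (hθ : (k : ℝ) ≤ θ) : ∫ ξ in (0 : ℝ)..θ, storageFlow k i j ξ = storageLength k i j := by
  have hle : (storageStart k i j : ℝ) + storageLength k i j ≤ k := by
    exact_mod_cast storageStart_add_storageLength_le hi hj
  rw [integral_storageFlow, min_eq_right (by linarith), max_eq_left (Nat.cast_nonneg _)]

theorem storageFlow_conservation (hi : i < k) {m : ℕ} (hm : m < k) (hmi : m ≠ i)
    (θ : ℝ) : 0 ≤ (∫ ξ in (0 : ℝ)..(θ - 1), storageFlow k i ((m + k - 1) % k) ξ) -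
      ∫ ξ in (0 : ℝ)..θ, storageFlow k i m ξ := by
  rw [integral_storageFlow, integral_storageFlow]
  by_cases hsink : m = (i + k - 1) % k
  · rw [show storageLength k i m = 0 by simp [storageLength, hsink], Nat.cast_zero,
      max_eq_right (min_le_right _ _), sub_zero]
    exact le_max_right _ _
  · obtain ⟨hlen, hstart⟩ := storageLength_pred_eq_and_storageStart_pred_lt hi hm hmi hsink
    have hstart' : (storageStart k i ((m + k - 1) % k) : ℝ) + 1 ≤ storageStart k i m := by
      exact_mod_cast hstart
    rw [hlen, sub_nonneg]
    exact max_le_max_right 0 (min_le_min_right _ (by linarith))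

theorem storageFlow_demand (hk : 2 ≤ k) (hi : i < k) {m : ℕ} (hm : m < k) :
    (∫ ξ in (0 : ℝ)..((k : ℝ) + 1 - 1), storageFlow k i ((m + k - 1) % k) ξ) -
        (∫ ξ in (0 : ℝ)..((k : ℝ) + 1), storageFlow k i m ξ) =
      if m = (i + k - 1) % k then demandI i else if m = i then -demandI i else 0 := by
  have hpred : (m + k - 1) % k = (i + k - 1) % k ↔ m = i := by
    rw [Nat.add_sub_one_mod_eq hm, Nat.add_sub_one_mod_eq hi]
    split_ifs <;> omega
  have hsrc : i ≠ (i + k - 1) % k := by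
    rw [Nat.add_sub_one_mod_eq hi]
    split_ifs <;> omega
  rw [integral_storageFlow_of_le hi (Nat.mod_lt _ (by omega)) (by linarith),
    integral_storageFlow_of_le hi hm (by linarith), storageLength_eq_ite, storageLength_eq_ite]
  simp only [hpred]
  split_ifs <;> simp_all

theorem isMCFlow_storageFlow (hk : 2 ≤ k) : IsMCFlow k ((k : ℝ) + 1) demandI (storageFlow k) :=
  ⟨by positivity, fun _ _ _ _ => integrable_storageFlow,
    fun _ _ _ _ => indicator_nonneg fun _ _ => zero_le_one,
    fun _ hi _ hj _ => storageFlow_eq_zero_of_notMem hi hj,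
    fun _ hj => Filter.Eventually.of_forall (sum_storageFlow_le_one hj),
    fun _ hi _ hm hmi θ _ => storageFlow_conservation hi hm hmi θ,
    fun _ hi _ hm => storageFlow_demand hk hi hm⟩

end StorageFlow

namespace IsMCFlow

variable {k : ℕ} {T : ℝ} {d : ℕ → ℝ} {f : ℕ → ℕ → ℝ → ℝ} {i j : ℕ}

theorem integral_eq_zero_of_nonpos (hf : IsMCFlow k T d f) (hi : i < k) (hj : j < k) {θ : ℝ}
    (hθ : θ ≤ 0) : ∫ ξ in (0 : ℝ)..θ, f i j ξ = 0 :=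
  intervalIntegral_zero_eq_zero_of_nonpos
    (fun ξ hξ => hf.2.2.2.1 i hi j hj ξ fun h => hξ.not_ge h.1) hθ

theorem monotone_integral (hf : IsMCFlow k T d f) (hi : i < k) (hj : j < k) :
    Monotone fun θ => ∫ ξ in (0 : ℝ)..θ, f i j ξ :=
  monotone_intervalIntegral_zero (hf.2.1 i hi j hj) (hf.2.2.1 i hi j hj)

theorem integral_nonneg (hf : IsMCFlow k T d f) (hi : i < k) (hj : j < k) (θ : ℝ) :
    0 ≤ ∫ ξ in (0 : ℝ)..θ, f i j ξ :=
  (hf.integral_eq_zero_of_nonpos hi hj (min_le_right θ 0)).symm.le.trans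
    (hf.monotone_integral hi hj (min_le_left θ 0))

theorem sum_integral_le (hf : IsMCFlow k T d f) (hj : j < k) {a b : ℝ} (hab : a ≤ b) :
    ∑ i ∈ Finset.range k, ∫ ξ in a..b, f i j ξ ≤ b - a :=
  sum_intervalIntegral_le_of_ae_sum_le_one (fun i hi => hf.2.1 i (Finset.mem_range.1 hi) j hj)
    (hf.2.2.2.2.1 j hj) hab

end IsMCFlow

namespace NoStorage

variable {k : ℕ} {T : ℝ} {d : ℕ → ℝ} {f : ℕ → ℕ → ℝ → ℝ} {i : ℕ}

theorem integral_add_mod_eq (hns : NoStorage k T f) (hf : IsMCFlow k T d f) (hi : i < k) {p : ℕ}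
    (hp : p ≤ k - 2) {θ : ℝ} (hθ : θ < T) :
    ∫ ξ in (0 : ℝ)..θ, f i ((i + p) % k) ξ = ∫ ξ in (0 : ℝ)..(θ - p), f i i ξ := by
  induction p generalizing θ with
  | zero => simp [Nat.mod_eq_of_lt hi]
  | succ p ih =>
    have hk : 0 < k := by omega
    have hm : (i + (p + 1)) % k < k := Nat.mod_lt _ hk
    rcases lt_or_ge θ 0 with hθ0 | hθ0
    · rw [hf.integral_eq_zero_of_nonpos hi hm hθ0.le,
        hf.integral_eq_zero_of_nonpos hi hi (by push_cast; linarith)]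
    have hm_src : (i + (p + 1)) % k ≠ i := by
      conv_rhs => rw [← Nat.mod_eq_of_lt hi, ← add_zero i]
      rw [Ne, Nat.add_mod_eq_add_mod_iff (by omega) hk]
      omega
    have hm_sink : (i + (p + 1)) % k ≠ (i + k - 1) % k := by
      rw [Nat.add_sub_assoc (by omega), Ne, Nat.add_mod_eq_add_mod_iff (by omega) (by omega)]
      omega
    rw [← hns i hi _ hm hm_src hm_sink θ ⟨hθ0, hθ⟩, ← add_assoc,
      Nat.add_one_mod_add_sub_one_mod hk, ih (by omega) (by linarith)]
    congr 1
    push_cast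
    ring

theorem demand_le_integral_source (hns : NoStorage k T f) (hf : IsMCFlow k T d f) (hk : 2 ≤ k)
    (hi : i < k) : d i ≤ ∫ ξ in (0 : ℝ)..(T - ((k : ℝ) - 1)), f i i ξ := by
  have hk0 : 0 < k := by omega
  have hsink : (i + k - 1) % k < k := Nat.mod_lt _ hk0
  have hpred : ((i + k - 1) % k + k - 1) % k = (i + (k - 2)) % k := by
    rw [show i + k - 1 = i + (k - 2) + 1 by omega]
    exact Nat.add_one_mod_add_sub_one_mod hk0 _
  have hdem := hf.2.2.2.2.2.2 i hi _ hsink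
  rw [if_pos rfl, hpred, hns.integral_add_mod_eq hf hi le_rfl (by linarith), Nat.cast_sub hk,
    show T - 1 - ((k : ℝ) - (2 : ℕ)) = T - ((k : ℝ) - 1) by push_cast; ring] at hdem
  linarith [hf.integral_nonneg hi hsink T]

theorem sub_one_lt (hns : NoStorage k T f) (hf : IsMCFlow k T d f) (hk : 2 ≤ k) (hi : i < k)
    (hd : 0 < d i) : (k : ℝ) - 1 < T := by
  by_contra! hT
  have := hns.demand_le_integral_source hf hk hi
  rw [hf.integral_eq_zero_of_nonpos hi hi (by linarith)] at this
  linarith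

theorem integral_source_eq_sum_window (hns : NoStorage k T f) (hf : IsMCFlow k T d f)
    (hi : i < k) (hT : (k : ℝ) - 1 < T) :
    ∫ ξ in (0 : ℝ)..((k : ℝ) - 1), f i i ξ =
      ∑ p ∈ Finset.range (k - 1), ∫ ξ in ((k : ℝ) - 2)..((k : ℝ) - 1), f i ((i + p) % k) ξ := by
  set F : ℕ → ℝ := fun q => ∫ ξ in (0 : ℝ)..((k : ℝ) - 1 - q), f i i ξ
  have hwindow : ∀ p ∈ Finset.range (k - 1),
      ∫ ξ in ((k : ℝ) - 2)..((k : ℝ) - 1), f i ((i + p) % k) ξ = F p - F (p + 1) := by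
    intro p hp
    have hp : p ≤ k - 2 := by have := Finset.mem_range.1 hp; omega
    have hint : Integrable (f i ((i + p) % k)) := hf.2.1 i hi _ (Nat.mod_lt _ (by omega))
    rw [← intervalIntegral.integral_interval_sub_left hint.intervalIntegrable
      hint.intervalIntegrable,
      hns.integral_add_mod_eq hf hi hp hT, hns.integral_add_mod_eq hf hi hp (by linarith)]
    simp only [F]
    push_cast
    ring_nf
  rw [Finset.sum_congr rfl hwindow, Finset.sum_range_sub']
  simp [F, Nat.cast_sub (show 1 ≤ k by omega)]

theorem demand_le_sum_window (hns : NoStorage k T f) (hf : IsMCFlow k T d f) (hk : 2 ≤ k)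
    (hi : i < k) (hT : (k : ℝ) - 1 < T) (hT' : T ≤ 2 * (k : ℝ) - 2) :
    d i ≤ ∑ j ∈ Finset.range k, ∫ ξ in ((k : ℝ) - 2)..((k : ℝ) - 1), f i j ξ :=
  calc d i ≤ ∫ ξ in (0 : ℝ)..(T - ((k : ℝ) - 1)), f i i ξ :=
        hns.demand_le_integral_source hf hk hi
    _ ≤ ∫ ξ in (0 : ℝ)..((k : ℝ) - 1), f i i ξ := hf.monotone_integral hi hi (by linarith)
    _ = ∑ p ∈ Finset.range (k - 1), ∫ ξ in ((k : ℝ) - 2)..((k : ℝ) - 1), f i ((i + p) % k) ξ :=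
        hns.integral_source_eq_sum_window hf hi hT
    _ ≤ _ := Finset.sum_range_add_mod_le (fun j hj => intervalIntegral.integral_nonneg
        (by linarith) fun ξ _ => hf.2.2.1 i hi j hj ξ) (by omega) i

end NoStorage

theorem sum_range_demandI {k : ℕ} (hk : 0 < k) : ∑ i ∈ Finset.range k, demandI i = k + 1 := by
  obtain ⟨n, rfl⟩ := Nat.exists_eq_add_of_lt hk
  rw [Finset.sum_range_succ']
  simp only [demandI, Nat.add_one_ne_zero, if_false, if_true, Finset.sum_const, Finset.card_range,
    nsmul_eq_mul, mul_one]
  push_cast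
  ring

theorem IsMCFlow.two_mul_sub_two_lt_of_noStorage {k : ℕ} {T : ℝ} {f : ℕ → ℕ → ℝ → ℝ}
    (hf : IsMCFlow k T demandI f) (hns : NoStorage k T f) (hk : 2 ≤ k) : 2 * (k : ℝ) - 2 < T := by
  by_contra! hT
  have hT' : (k : ℝ) - 1 < T := hns.sub_one_lt hf hk (i := 0) (by omega) (by norm_num [demandI])
  have hcount : (k : ℝ) + 1 ≤ k :=
    calc (k : ℝ) + 1 = ∑ i ∈ Finset.range k, demandI i := (sum_range_demandI (by omega)).symm
      _ ≤ ∑ i ∈ Finset.range k, ∑ j ∈ Finset.range k,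
            ∫ ξ in ((k : ℝ) - 2)..((k : ℝ) - 1), f i j ξ :=
        Finset.sum_le_sum fun i hi => hns.demand_le_sum_window hf hk (Finset.mem_range.1 hi) hT' hT
      _ = ∑ j ∈ Finset.range k, ∑ i ∈ Finset.range k,
            ∫ ξ in ((k : ℝ) - 2)..((k : ℝ) - 1), f i j ξ := Finset.sum_comm
      _ ≤ ∑ j ∈ Finset.range k, (1 : ℝ) := Finset.sum_le_sum fun j hj =>
        (hf.sum_integral_le (Finset.mem_range.1 hj) (by linarith)).trans_eq (by ring)
      _ = k := by simp
  linarith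

theorem eventually_two_sub_mul_lt {ε : ℝ} (hε : 0 < ε) :
    ∀ᶠ k : ℕ in Filter.atTop, (2 - ε) * ((k : ℝ) + 1) < 2 * (k : ℝ) - 2 := by
  filter_upwards [Filter.eventually_gt_atTop ⌈4 / ε⌉₊] with k hk
  have h4 : 4 < ε * k := by
    rw [← div_lt_iff₀' hε]
    exact (Nat.le_ceil _).trans_lt (by exact_mod_cast hk)
  nlinarith

/-- For every `ε > 0` there is `k ≥ 3` such that for the instance `I_k`:
(a) there is a multi-commodity flow over time (storage permitted) with time horizon `k + 1`;
(b) every multi-commodity flow over time without intermediate storage has time horizon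
strictly greater than `2k - 2`; and (c) `2k - 2 > (2 - ε) (k + 1)`.
Hence the speed-up through storage can be arbitrarily close to the factor `2`. -/
theorem speedup_through_storage_close_to_two (ε : ℝ) (hε : 0 < ε) :
    ∃ k : ℕ, 3 ≤ k ∧
      (∃ f : ℕ → ℕ → ℝ → ℝ, IsMCFlow k ((k : ℝ) + 1) demandI f) ∧
      (∀ (T : ℝ) (f : ℕ → ℕ → ℝ → ℝ),
        IsMCFlow k T demandI f → NoStorage k T f → 2 * (k : ℝ) - 2 < T) ∧
      (2 - ε) * ((k : ℝ) + 1) < 2 * (k : ℝ) - 2 := by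
  obtain ⟨k, hk, hratio⟩ :=
    ((Filter.eventually_ge_atTop 3).and (eventually_two_sub_mul_lt hε)).exists
  exact ⟨k, hk, ⟨storageFlow k, isMCFlow_storageFlow (by omega)⟩,
    fun _ _ hf hns => hf.two_mul_sub_two_lt_of_noStorage hns (by omega), hratio⟩
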